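/- Let p be a prime and n ≥ 1. If R is a local commutative ring whose residue field has characteristic p, then the ring W_n(R) of p-typical Witt vectors of length n is a local ring. -/

import Mathlib

/-!
The ring map `W_n(R) → R`, `x ↦ x₀`, reflects units as soon as `p` lies in the Jacobson radical
of `R`, and a ring admitting a unit-reflecting map to a local ring is local. Units are lifted
one Witt component at a time. The kernel of `W_{k+1}(R) → W_k(R)` consists of the `V^k a`, and
`V^k a · V^k b = V^k (a b p^k)`, so `1 + V^k a` is inverted modulo `V^{k+1}` by `1 + V^k b`
whenever `b₀ (1 + p^k a₀) = -a₀`; for `k ≥ 1` the factor `1 + p^k a₀` is a unit because `p`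
is in the Jacobson radical.
-/

namespace WittVector

open Function

variable {p : ℕ} [Fact p.Prime] {R : Type*} [CommRing R]

local notation "𝕎" => WittVector p

theorem iterate_frobenius_iterate_verschiebung (x : 𝕎 R) (k : ℕ) :
    frobenius^[k] (verschiebung^[k] x) = x * (p : 𝕎 R) ^ k := by
  induction k with
  | zero => simp
  | succ k ih =>
    rw [iterate_succ_apply, iterate_succ_apply', frobenius_verschiebung, ← RingHom.coe_pow,
      map_mul, map_natCast, RingHom.coe_pow, ih, pow_succ, mul_assoc]

theorem iterate_verschiebung_mul_iterate_verschiebung (x y : 𝕎 R) (k : ℕ) :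
    verschiebung^[k] x * verschiebung^[k] y = verschiebung^[k] (x * y * (p : 𝕎 R) ^ k) := by
  rw [iterate_verschiebung_mul_left, iterate_frobenius_iterate_verschiebung, mul_assoc]

theorem truncate_iterate_verschiebung_eq_zero {x : 𝕎 R} (hx : x.coeff 0 = 0) (k : ℕ) :
    truncate (k + 1) (verschiebung^[k] x) = 0 := by
  rw [← RingHom.mem_ker, mem_ker_truncate]
  intro i hi
  rcases Nat.lt_succ_iff_lt_or_eq.mp hi with hik | rfl
  · exact iterate_verschiebung_coeff_eq_zero x hik
  · simpa using (iterate_verschiebung_coeff x i 0).trans hx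

theorem isUnit_truncate_one_add_iterate_verschiebung (a : 𝕎 R) (k : ℕ)
    (ha : IsUnit (1 + (p : R) ^ k * a.coeff 0)) :
    IsUnit (truncate (k + 1) (1 + verschiebung^[k] a)) := by
  obtain ⟨u, hu⟩ := ha
  set b : 𝕎 R := teichmuller p (-(a.coeff 0 * ↑u⁻¹))
  have hc : (a + b + a * b * (p : 𝕎 R) ^ k).coeff 0 = 0 := by
    have : (a + b + a * b * (p : 𝕎 R) ^ k).coeff 0 =
        a.coeff 0 + b.coeff 0 * (1 + (p : R) ^ k * a.coeff 0) := by
      simp only [← constantCoeff_apply, map_add, map_mul, map_pow, map_natCast]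
      ring
    rw [this, ← hu, teichmuller_coeff_zero, neg_mul, mul_assoc, Units.inv_mul, mul_one,
      add_neg_cancel]
  have hprod : (1 + verschiebung^[k] a) * (1 + verschiebung^[k] b) =
      1 + verschiebung^[k] (a + b + a * b * (p : 𝕎 R) ^ k) := by
    rw [iterate_map_add, iterate_map_add, ← iterate_verschiebung_mul_iterate_verschiebung]
    ring
  refine IsUnit.of_mul_eq_one (truncate (k + 1) (1 + verschiebung^[k] b)) ?_
  rw [← map_mul, hprod, map_add, truncate_iterate_verschiebung_eq_zero hc, map_one, add_zero]

theorem isUnit_truncate_of_isUnit_coeff_zero (hp : (p : R) ∈ Ideal.jacobson ⊥) {x : 𝕎 R}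
    (hx : IsUnit (x.coeff 0)) (n : ℕ) : IsUnit (truncate (n + 1) x) := by
  induction n with
  | zero =>
    have h := isUnit_truncate_one_add_iterate_verschiebung (x - 1) 0 (by
      rwa [pow_zero, one_mul, ← constantCoeff_apply, map_sub, map_one, constantCoeff_apply,
        add_sub_cancel])
    rwa [iterate_zero_apply, add_sub_cancel] at h
  | succ n ih =>
    obtain ⟨v, hv⟩ := ih
    obtain ⟨y, hy⟩ := truncate_surjective p (n + 1) R ↑v⁻¹
    have hxy : x * y - 1 ∈ RingHom.ker (truncate (n + 1)) := by
      rw [RingHom.mem_ker, map_sub, map_mul, hy, ← hv, Units.mul_inv, map_one, sub_self]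
    rw [mem_ker_truncate] at hxy
    have h := isUnit_truncate_one_add_iterate_verschiebung ((x * y - 1).shift (n + 1)) (n + 1)
      (by rw [pow_succ', mul_assoc, add_comm]; exact Ideal.mem_jacobson_bot.mp hp _)
    rw [← eq_iterate_verschiebung hxy, add_sub_cancel, map_mul] at h
    exact isUnit_of_mul_isUnit_left h

end WittVector

instance TruncatedWittVector.nontrivial {p : ℕ} [Fact p.Prime] {R : Type*} [CommRing R]
    [Nontrivial R] {n : ℕ} [NeZero n] : Nontrivial (TruncatedWittVector p n R) := by
  refine ⟨0, 1, fun h => ?_⟩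
  have h0 := congrArg (TruncatedWittVector.coeff 0)
    (h.trans (map_one (WittVector.truncate n)).symm)
  rw [TruncatedWittVector.coeff_zero, WittVector.coeff_truncate, Fin.val_zero,
    WittVector.one_coeff_zero] at h0
  exact zero_ne_one h0

theorem stmt_2 (p : ℕ) [Fact p.Prime] (n : ℕ) (hn : 1 ≤ n) (R : Type*) [CommRing R]
    [IsLocalRing R] [CharP (IsLocalRing.ResidueField R) p] :
    IsLocalRing (TruncatedWittVector p n R) := by
  have hp : (p : R) ∈ Ideal.jacobson ⊥ := by
    rw [IsLocalRing.jacobson_eq_maximalIdeal ⊥ bot_ne_top, ← IsLocalRing.residue_eq_zero_iff,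
      map_natCast, CharP.cast_eq_zero]
  obtain ⟨m, rfl⟩ := Nat.exists_eq_add_of_le' hn
  refine IsLocalRing.of_isUnit_or_isUnit_one_sub_self fun a => ?_
  obtain ⟨x, rfl⟩ := WittVector.truncate_surjective p (m + 1) R a
  rw [← map_one (WittVector.truncate (m + 1)), ← map_sub]
  refine (IsLocalRing.isUnit_or_isUnit_one_sub_self (x.coeff 0)).imp
    (WittVector.isUnit_truncate_of_isUnit_coeff_zero hp · m)
    fun h => WittVector.isUnit_truncate_of_isUnit_coeff_zero hp ?_ m
  rwa [← WittVector.constantCoeff_apply, map_sub, map_one]
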